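/- arXiv:2412.12307 — 2 statements merged into one kernel-verified Lean document; each statement's English description precedes it below -/
import Mathlib

section
/- For every positive non-square integer d, the Pell equation x² − d·y² = 1 has a solution in positive integers x, y. -/
theorem pell_standard_has_positive_solution
    (d : ℤ) (hd : 0 < d) (hns : ¬ IsSquare d) :
    ∃ x y : ℤ, 0 < x ∧ 0 < y ∧ x ^ 2 - d * y ^ 2 = 1 := by
  obtain ⟨a, ha, hy⟩ := Pell.Solution₁.exists_pos_of_not_isSquare hd hns
  exact ⟨a.x, a.y, zero_lt_one.trans ha, hy, a.prop⟩
end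

section
/- For n a positive integer divisible by 4, the generalized Pell equation x² − 4(n² − 2)·y² = −8 has no integer solutions. -/
set_option maxRecDepth 4000 in
lemma pell_aux : ∀ a b : ZMod 64, a ^ 2 + 8 * b ^ 2 + 8 ≠ 0 := by decide

theorem pell_no_solution_neg_eight
    (n : ℤ) (hn : 0 < n) (h4 : 4 ∣ n) :
    ¬ ∃ x y : ℤ, x ^ 2 - 4 * (n ^ 2 - 2) * y ^ 2 = -8 := by
  rintro ⟨x, y, h⟩
  obtain ⟨m, rfl⟩ := h4
  apply pell_aux (x : ZMod 64) (y : ZMod 64)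
  have key : (x ^ 2 + 8 * y ^ 2 + 8 : ℤ) = 64 * (m ^ 2 * y ^ 2) := by ring_nf; linarith [h]
  have := congrArg (fun z : ℤ => (z : ZMod 64)) key
  push_cast at this
  rw [this]
  have h64 : (64 : ZMod 64) = 0 := by decide
  rw [h64, zero_mul]
end
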